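/- There exist constants C₁ > 0 and C₂ > 0 such that for all (x,y) ∈ ℝ² with y ≠ 0, the fundamental solution satisfies |K(x,y)| ≤ C₁ · |y|^{−1/3} · e^{−C₂(|x| + |y|^{2/3})}. -/

import Mathlib

/-! The kernel factorises, `H(x,y,t) = G_t(x) Q_t(y)`, into the one-dimensional Fourier
transforms of `e^{-tξ²}` and `e^{-tξ⁴}`. `G_t(x) = √π t^{-1/2} e^{-π²x²/t}` is explicit. For `Q_t`,
Cauchy's theorem moves the line of integration to `Im ξ = ∓1/3` (the integrand decays on
horizontal strips), which gives `|Q_t(y)| ≲ t^{-1/4} e^{t/3 - 2|y|}`. With `|x| ≤ t/3 + π²x²/t`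
this yields `e^{-t} |H| ≲ t^{-3/4} e^{-t/3} e^{-|x| - 2|y|}`, integrable in `t`, so
`|K(x,y)| ≲ e^{-|x| - 2|y|}`; finally `e^{-2s} ≲ s^{-1/3} e^{-s^{2/3}}`. -/

open MeasureTheory

noncomputable section

/-- H(x,y,t) = ∫_{ℝ²} e^{−2πi(xξ₁+yξ₂)} e^{−t(ξ₁²+ξ₂⁴)} dξ. -/
def Hker (x y t : ℝ) : ℂ :=
  ∫ ξ : ℝ × ℝ,
    Complex.exp (-2 * Real.pi * Complex.I * ((x : ℂ) * (ξ.1 : ℂ) + (y : ℂ) * (ξ.2 : ℂ)))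
      * Complex.exp (-(t : ℂ) * ((ξ.1 : ℂ) ^ 2 + (ξ.2 : ℂ) ^ 4))

/-- Fundamental solution K(x,y) = ∫₀^∞ e^{−t} H(x,y,t) dt of −∂ₓₓ + ∂_yyyy + 1. -/
def Kker (x y : ℝ) : ℂ :=
  ∫ t in Set.Ioi (0 : ℝ), Real.exp (-t) • Hker x y t

end

open Real Filter Topology Set Complex
open scoped Interval

theorem integral_eq_integral_add_mul_I {f : ℂ → ℂ} (hf : Differentiable ℂ f) {η : ℝ}
    {g : ℝ → ℝ} (hg : Tendsto g (cocompact ℝ) (𝓝 0))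
    (hfg : ∀ x s : ℝ, s ∈ Ι 0 η → ‖f (x + s * I)‖ ≤ g x)
    (h₀ : Integrable fun x : ℝ => f x) (hη : Integrable fun x : ℝ => f (x + η * I)) :
    ∫ x : ℝ, f x = ∫ x : ℝ, f (x + η * I) := by
  have vertical {l : Filter ℝ} {u : ℝ → ℝ} (hu : Tendsto u l (cocompact ℝ)) :
      Tendsto (fun T => ∫ s in (0 : ℝ)..η, f (u T + s * I)) l (𝓝 0) := by
    refine squeeze_zero_norm
      (fun T => intervalIntegral.norm_integral_le_of_norm_le_const (hfg (u T))) ?_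
    simpa using (hg.comp hu).mul_const |η - 0|
  have rect (T : ℝ) : ∫ x in -T..T, f (x + η * I) = (∫ x in -T..T, f x)
      + I • (∫ s in (0 : ℝ)..η, f (T + s * I)) - I • (∫ s in (0 : ℝ)..η, f (-T + s * I)) := by
    have := integral_boundary_rect_eq_zero_of_differentiableOn f (-T) (T + η * I)
      hf.differentiableOn
    simp only [neg_im, ofReal_im, neg_zero, ofReal_zero, zero_mul, add_zero, neg_re,
      ofReal_re, add_re, mul_re, I_re, mul_zero, I_im, tsub_zero, add_im, mul_im,
      mul_one, zero_add, ofReal_neg] at this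
    linear_combination (norm := module) -this
  refine tendsto_nhds_unique ?_
    (intervalIntegral_tendsto_integral hη tendsto_neg_atTop_atBot tendsto_id)
  have := ((intervalIntegral_tendsto_integral h₀ tendsto_neg_atTop_atBot tendsto_id).add
    ((vertical (tendsto_id.mono_right atTop_le_cocompact)).const_smul I)).sub
    ((vertical (tendsto_neg_atTop_atBot.mono_right atBot_le_cocompact)).const_smul I)
  simpa only [smul_zero, add_zero, sub_zero, id, ofReal_neg, ← rect] using this

lemma integrable_exp_neg_mul_pow_four {c : ℝ} (hc : 0 < c) :
    Integrable fun x : ℝ => rexp (-c * x ^ 4) := by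
  refine ((integrable_exp_neg_mul_sq hc).const_mul (rexp c)).mono'
    (by fun_prop) (Eventually.of_forall fun x => ?_)
  rw [norm_of_nonneg (exp_nonneg _), ← Real.exp_add]
  gcongr
  nlinarith [mul_nonneg hc.le (sq_nonneg (x ^ 2 - 1)), mul_nonneg hc.le (sq_nonneg x)]

lemma tendsto_exp_neg_mul_pow_four_cocompact {c : ℝ} (hc : 0 < c) :
    Tendsto (fun x : ℝ => rexp (-c * x ^ 4)) (cocompact ℝ) (𝓝 0) := by
  have : Tendsto (fun x : ℝ => ‖x‖ ^ 4) (cocompact ℝ) atTop :=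
    (tendsto_pow_atTop (by norm_num)).comp tendsto_norm_cocompact_atTop
  refine tendsto_exp_atBot.comp ((tendsto_const_mul_atBot_of_neg (by linarith)).2 ?_)
  exact this.congr fun x => by rw [Real.norm_eq_abs, (by decide : Even 4).pow_abs]

lemma integral_exp_neg_mul_mul_pow_four (c : ℝ) {t : ℝ} (ht : 0 < t) :
    ∫ x : ℝ, rexp (-(c * t) * x ^ 4) = t ^ (-(1 / 4 : ℝ)) * ∫ x : ℝ, rexp (-c * x ^ 4) := by
  have h4 : (t ^ (1 / 4 : ℝ)) ^ 4 = t := by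
    rw [← rpow_natCast, ← rpow_mul ht.le]; norm_num
  have hscale (x : ℝ) : rexp (-(c * t) * x ^ 4) = rexp (-c * (t ^ (1 / 4 : ℝ) * x) ^ 4) := by
    rw [mul_pow, h4]; ring_nf
  simp_rw [hscale]
  rw [Measure.integral_comp_mul_left (fun u => rexp (-c * u ^ 4)), smul_eq_mul,
    abs_of_pos (by positivity), ← rpow_neg_one, ← rpow_mul ht.le]
  norm_num

lemma rpow_le_one_add {s a : ℝ} (hs : 0 ≤ s) (ha₀ : 0 ≤ a) (ha₁ : a ≤ 1) : s ^ a ≤ 1 + s :=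
  calc s ^ a ≤ (1 + s) ^ a := rpow_le_rpow hs (by linarith) ha₀
    _ ≤ 1 + a * s := rpow_one_add_le_one_add_mul_self (by linarith) ha₀ ha₁
    _ ≤ 1 + s := by nlinarith

lemma exp_neg_two_mul_le {s : ℝ} (hs : 0 < s) :
    rexp (-(2 * s)) ≤ 3 * s ^ (-(1 : ℝ) / 3) * rexp (-s ^ ((2 : ℝ) / 3)) := by
  have hbound : s ^ ((1 : ℝ) / 3) * rexp (s ^ ((2 : ℝ) / 3) - 2 * s) ≤ 3 :=
    calc s ^ ((1 : ℝ) / 3) * rexp (s ^ ((2 : ℝ) / 3) - 2 * s)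
        ≤ (1 + s) * rexp (1 - s) := by
          gcongr ?_ * rexp ?_
          · exact rpow_le_one_add hs.le (by norm_num) (by norm_num)
          · linarith [rpow_le_one_add hs.le (a := 2 / 3) (by norm_num) (by norm_num)]
      _ ≤ rexp s * rexp (1 - s) := by gcongr; linarith [add_one_le_exp s]
      _ ≤ 3 := by rw [← Real.exp_add, add_sub_cancel]; linarith [exp_one_lt_d9]
  have hcancel : s ^ (-(1 : ℝ) / 3) * s ^ ((1 : ℝ) / 3) = 1 := by
    rw [← rpow_add hs]; norm_num
  calc rexp (-(2 * s))
      = s ^ (-(1 : ℝ) / 3) * rexp (-s ^ ((2 : ℝ) / 3)) *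
          (s ^ ((1 : ℝ) / 3) * rexp (s ^ ((2 : ℝ) / 3) - 2 * s)) := by
        rw [mul_mul_mul_comm, hcancel, one_mul, ← Real.exp_add]
        ring_nf
    _ ≤ s ^ (-(1 : ℝ) / 3) * rexp (-s ^ ((2 : ℝ) / 3)) * 3 := by gcongr
    _ = _ := by ring

lemma abs_le_div_three_add_sq_div {t : ℝ} (ht : 0 < t) (x : ℝ) :
    |x| ≤ t / 3 + π ^ 2 * x ^ 2 / t := by
  rw [div_add_div _ _ (by norm_num : (3 : ℝ) ≠ 0) ht.ne', le_div_iff₀ (by positivity)]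
  have hπ : 3 ≤ π ^ 2 := by nlinarith [pi_gt_three]
  nlinarith [sq_nonneg (t - 3 * |x|), sq_abs x, mul_nonneg ht.le (abs_nonneg x),
    mul_le_mul_of_nonneg_right hπ (sq_nonneg x)]

noncomputable def fourierExpNegMulPow (p : ℕ) (t x : ℝ) : ℂ :=
  ∫ u : ℝ, cexp (-2 * π * I * x * u - t * u ^ p)

lemma Hker_eq_mul (x y t : ℝ) :
    Hker x y t = fourierExpNegMulPow 2 t x * fourierExpNegMulPow 4 t y := by
  rw [Hker, fourierExpNegMulPow, fourierExpNegMulPow, ← integral_prod_mul,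
    ← Measure.volume_eq_prod]
  congr 1 with ξ
  rw [← Complex.exp_add, ← Complex.exp_add]
  ring_nf

lemma norm_fourierExpNegMulPow_two {t : ℝ} (ht : 0 < t) (x : ℝ) :
    ‖fourierExpNegMulPow 2 t x‖ = √π * t ^ (-(1 / 2 : ℝ)) * rexp (-(π ^ 2 * x ^ 2 / t)) := by
  have hgauss := fourierIntegral_gaussian (b := t) (by simpa using ht) (-2 * π * x)
  have hcpow : ‖(π / t : ℂ) ^ (1 / 2 : ℂ)‖ = √π * t ^ (-(1 / 2 : ℝ)) := by
    rw [show (π / t : ℂ) = ((π / t : ℝ) : ℂ) by push_cast; rfl,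
      norm_cpow_eq_rpow_re_of_pos (by positivity), div_rpow pi_pos.le ht.le, sqrt_eq_rpow,
      rpow_neg ht.le]
    norm_num [div_eq_mul_inv]
  have hintegrand (u : ℝ) : cexp (-2 * π * I * x * u - t * u ^ 2)
      = cexp (I * (-2 * π * x : ℂ) * u) * cexp (-(t : ℂ) * u ^ 2) := by
    rw [← Complex.exp_add]; ring_nf
  rw [fourierExpNegMulPow, funext hintegrand, hgauss, norm_mul, hcpow, Complex.norm_exp]
  congr 2
  rw [show -(-2 * π * x : ℂ) ^ 2 / (4 * t) = ((-(π ^ 2 * x ^ 2 / t) : ℝ) : ℂ) by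
    push_cast; field_simp; ring, ofReal_re]

lemma norm_cexp_quartic (y t x s : ℝ) :
    ‖cexp (-2 * π * I * y * (x + s * I) - t * (x + s * I) ^ 4)‖ =
      rexp (2 * π * y * s - t * (x ^ 4 - 6 * x ^ 2 * s ^ 2 + s ^ 4)) := by
  rw [Complex.norm_exp]
  congr 1
  simp only [sub_re, mul_re, mul_im, pow_succ, pow_zero, one_mul, add_re, add_im, ofReal_re,
    ofReal_im, I_re, I_im, neg_re, neg_im, re_ofNat, im_ofNat]
  ring

/-- The constant `17` comes from `(x² - 6s²)² ≥ 0`. -/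
lemma norm_cexp_quartic_le {t : ℝ} (ht : 0 ≤ t) (y x s : ℝ) :
    ‖cexp (-2 * π * I * y * (x + s * I) - t * (x + s * I) ^ 4)‖ ≤
      rexp (2 * π * y * s + 17 * t * s ^ 4) * rexp (-(t / 2) * x ^ 4) := by
  rw [norm_cexp_quartic, ← Real.exp_add]
  gcongr
  nlinarith [mul_nonneg ht (sq_nonneg (x ^ 2 - 6 * s ^ 2))]

lemma norm_fourierExpNegMulPow_four_le {t : ℝ} (ht : 0 < t) (y η : ℝ) :
    ‖fourierExpNegMulPow 4 t y‖ ≤ rexp (2 * π * y * η + 17 * t * η ^ 4) *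
      (t ^ (-(1 / 4 : ℝ)) * ∫ x : ℝ, rexp (-(1 / 2) * x ^ 4)) := by
  set f : ℂ → ℂ := fun z => cexp (-2 * π * I * y * z - t * z ^ 4)
  have hdom (s : ℝ) : Integrable fun x : ℝ =>
      rexp (2 * π * y * s + 17 * t * s ^ 4) * rexp (-(t / 2) * x ^ 4) :=
    (integrable_exp_neg_mul_pow_four (by positivity)).const_mul _
  have hint (s : ℝ) : Integrable fun x : ℝ => f (x + s * I) :=
    (hdom s).mono' (by fun_prop) (Eventually.of_forall fun x => norm_cexp_quartic_le ht.le y x s)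
  have hf : Differentiable ℂ f := by fun_prop
  have hg := (tendsto_exp_neg_mul_pow_four_cocompact (by positivity : 0 < t / 2)).const_mul
    (rexp (2 * π * |y| * |η| + 17 * t * η ^ 4))
  rw [mul_zero] at hg
  have hshift : fourierExpNegMulPow 4 t y = ∫ x : ℝ, f (x + η * I) := by
    refine integral_eq_integral_add_mul_I hf hg
      (fun x s hs => (norm_cexp_quartic_le ht.le y x s).trans ?_) (by simpa using hint 0) (hint η)
    have hsη : |s| ≤ |η| := by simpa using abs_sub_left_of_mem_uIcc (uIoc_subset_uIcc hs)
    have hys : y * s ≤ |y| * |η| := (le_abs_self _).trans (by rw [abs_mul]; gcongr)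
    have hs4 : s ^ 4 ≤ η ^ 4 := by
      rw [← (by decide : Even 4).pow_abs s, ← (by decide : Even 4).pow_abs η]
      gcongr
    gcongr rexp ?_ * _
    nlinarith [pi_pos]
  rw [hshift]
  calc ‖∫ x : ℝ, f (x + η * I)‖
      ≤ ∫ x : ℝ, rexp (2 * π * y * η + 17 * t * η ^ 4) * rexp (-(t / 2) * x ^ 4) :=
        norm_integral_le_of_norm_le (hdom η) (ae_of_all _ fun x => norm_cexp_quartic_le ht.le y x η)
    _ = _ := by
        rw [integral_const_mul, show t / 2 = 1 / 2 * t by ring,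
          integral_exp_neg_mul_mul_pow_four _ ht]

lemma norm_fourierExpNegMulPow_four_le_exp {t : ℝ} (ht : 0 < t) (y : ℝ) :
    ‖fourierExpNegMulPow 4 t y‖ ≤
      t ^ (-(1 / 4 : ℝ)) * (∫ x : ℝ, rexp (-(1 / 2) * x ^ 4)) * rexp (t / 3 - 2 * |y|) := by
  obtain ⟨η, hyη, hη⟩ : ∃ η : ℝ, y * η = -|y| / 3 ∧ η ^ 4 = 1 / 81 := by
    rcases le_total 0 y with hy | hy
    · exact ⟨-1 / 3, by rw [abs_of_nonneg hy]; ring, by norm_num⟩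
    · exact ⟨1 / 3, by rw [abs_of_nonpos hy]; ring, by norm_num⟩
  have hyη' : 2 * π * y * η = -(2 * π * |y|) / 3 := by rw [mul_assoc (2 * π), hyη]; ring
  calc ‖fourierExpNegMulPow 4 t y‖
      ≤ rexp (2 * π * y * η + 17 * t * η ^ 4) *
          (t ^ (-(1 / 4 : ℝ)) * ∫ x : ℝ, rexp (-(1 / 2) * x ^ 4)) :=
        norm_fourierExpNegMulPow_four_le ht y η
    _ ≤ rexp (t / 3 - 2 * |y|) * (t ^ (-(1 / 4 : ℝ)) * ∫ x : ℝ, rexp (-(1 / 2) * x ^ 4)) := by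
        gcongr rexp ?_ * _
        nlinarith [pi_gt_three, abs_nonneg y]
    _ = _ := by ring

lemma norm_exp_smul_Hker_le {t : ℝ} (ht : 0 < t) (x y : ℝ) :
    ‖rexp (-t) • Hker x y t‖ ≤ √π * (∫ u : ℝ, rexp (-(1 / 2) * u ^ 4)) *
      (t ^ (-(3 / 4 : ℝ)) * rexp (-(1 / 3) * t)) * rexp (-(|x| + 2 * |y|)) := by
  set c := ∫ u : ℝ, rexp (-(1 / 2) * u ^ 4)
  have hpow : t ^ (-(1 / 2 : ℝ)) * t ^ (-(1 / 4 : ℝ)) = t ^ (-(3 / 4 : ℝ)) := by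
    rw [← rpow_add ht]; norm_num
  rw [norm_smul, Hker_eq_mul, norm_mul, norm_fourierExpNegMulPow_two ht,
    norm_of_nonneg (exp_nonneg _)]
  calc rexp (-t) * (√π * t ^ (-(1 / 2 : ℝ)) * rexp (-(π ^ 2 * x ^ 2 / t)) *
        ‖fourierExpNegMulPow 4 t y‖)
      ≤ rexp (-t) * (√π * t ^ (-(1 / 2 : ℝ)) * rexp (-(π ^ 2 * x ^ 2 / t)) *
          (t ^ (-(1 / 4 : ℝ)) * c * rexp (t / 3 - 2 * |y|))) := by
        gcongr
        exact norm_fourierExpNegMulPow_four_le_exp ht y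
    _ = √π * c * t ^ (-(3 / 4 : ℝ)) * rexp (-t - π ^ 2 * x ^ 2 / t + t / 3 - 2 * |y|) := by
        have hexp : rexp (-t - π ^ 2 * x ^ 2 / t + t / 3 - 2 * |y|) =
            rexp (-t) * rexp (-(π ^ 2 * x ^ 2 / t)) * rexp (t / 3 - 2 * |y|) := by
          rw [← Real.exp_add, ← Real.exp_add]; ring_nf
        rw [hexp, ← hpow]
        ring
    _ ≤ √π * c * t ^ (-(3 / 4 : ℝ)) * rexp (-(1 / 3) * t + -(|x| + 2 * |y|)) := by
        gcongr
        linarith [abs_le_div_three_add_sq_div ht x]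
    _ = _ := by rw [Real.exp_add]; ring

lemma integrableOn_rpow_mul_exp_neg_div_three :
    IntegrableOn (fun t : ℝ => t ^ (-(3 / 4 : ℝ)) * rexp (-(1 / 3) * t)) (Ioi 0) := by
  simpa using integrableOn_rpow_mul_exp_neg_mul_rpow (s := -(3 / 4)) (p := 1) (b := 1 / 3)
    (by norm_num) one_pos (by norm_num)

lemma norm_Kker_le : ∃ C : ℝ, ∀ x y : ℝ, ‖Kker x y‖ ≤ C * rexp (-(|x| + 2 * |y|)) := by
  refine ⟨√π * (∫ u : ℝ, rexp (-(1 / 2) * u ^ 4)) *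
    ∫ t in Ioi 0, t ^ (-(3 / 4 : ℝ)) * rexp (-(1 / 3) * t), fun x y => ?_⟩
  refine (norm_integral_le_of_norm_le
    ((integrableOn_rpow_mul_exp_neg_div_three.const_mul _).mul_const _)
    ((ae_restrict_iff' measurableSet_Ioi).2 (ae_of_all _ fun t ht =>
      norm_exp_smul_Hker_le ht x y))).trans_eq ?_
  rw [integral_mul_const, integral_const_mul]

/-- Anisotropic pointwise decay of the fundamental solution. -/
theorem stmt_17 :
    ∃ C₁ > (0 : ℝ), ∃ C₂ > (0 : ℝ), ∀ x y : ℝ, y ≠ 0 →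
      ‖Kker x y‖ ≤ C₁ * |y| ^ (-(1 : ℝ) / 3) * Real.exp (-C₂ * (|x| + |y| ^ ((2 : ℝ) / 3))) := by
  obtain ⟨C, hC⟩ := norm_Kker_le
  refine ⟨3 * max C 1, by positivity, 1, one_pos, fun x y hy => ?_⟩
  calc ‖Kker x y‖ ≤ C * rexp (-(|x| + 2 * |y|)) := hC x y
    _ ≤ max C 1 * (rexp (-|x|) * rexp (-(2 * |y|))) := by
        rw [← Real.exp_add, ← neg_add]
        gcongr
        exact le_max_left C 1
    _ ≤ max C 1 * (rexp (-|x|) * (3 * |y| ^ (-(1 : ℝ) / 3) * rexp (-|y| ^ ((2 : ℝ) / 3)))) := by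
        gcongr
        exact exp_neg_two_mul_le (abs_pos.2 hy)
    _ = _ := by rw [neg_one_mul, neg_add, Real.exp_add]; ring
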